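/- arXiv:1011.2872 — 2 statements merged into one kernel-verified Lean document; each statement's English description precedes it below -/
import Mathlib

section
/- Let W_1 ≺ W_2 ≺ ⋯ be a sequence of windows (each W_k's shade being a pane of W_{k+1}), and suppose a subgraph of Z² contains, for each k ≥ 2, a vertical crossing of the cut-frame of ERB_k and a horizontal crossing of the extended bottom of ERB_k, and contains all edges inside ERB_1. Then from every point of the fork F(W_1) there is an infinite self-avoiding path to infinity within the union of the ERB_k's. -/
/-- Two sites of `ℤ²` are adjacent if they are at `L¹`-distance 1. -/
def SiteAdj (p q : ℤ × ℤ) : Prop :=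
  (p.1 - q.1).natAbs + (p.2 - q.2).natAbs = 1

/-- The rectangle `[x1,x2] × [y1,y2]` in `ℤ²`. -/
def Rect (x1 x2 y1 y2 : ℤ) : Set (ℤ × ℤ) :=
  {p | x1 ≤ p.1 ∧ p.1 ≤ x2 ∧ y1 ≤ p.2 ∧ p.2 ≤ y2}

/-- A horizontal crossing of `[x1,x2] × [y1,y2]` within the open set `S`. -/
def HCross (S : Set (ℤ × ℤ)) (x1 x2 y1 y2 : ℤ) : Prop :=
  ∃ m : ℕ, ∃ f : Fin (m + 1) → ℤ × ℤ,
    (∀ i, f i ∈ S ∧ f i ∈ Rect x1 x2 y1 y2) ∧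
    (∀ i : Fin m, SiteAdj (f i.castSucc) (f i.succ)) ∧
    (f 0).1 = x1 ∧ (f (Fin.last m)).1 = x2

/-- A vertical crossing of `[x1,x2] × [y1,y2]` within `S`. -/
def VCross (S : Set (ℤ × ℤ)) (x1 x2 y1 y2 : ℤ) : Prop :=
  ∃ m : ℕ, ∃ f : Fin (m + 1) → ℤ × ℤ,
    (∀ i, f i ∈ S ∧ f i ∈ Rect x1 x2 y1 y2) ∧
    (∀ i : Fin m, SiteAdj (f i.castSucc) (f i.succ)) ∧
    (f 0).2 = y1 ∧ (f (Fin.last m)).2 = y2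

/-- A window, determined by two congruent block complexes: `q` congruent
vertical frames of width `l` and `q` horizontal frames of width `l`, at mutual
distance `d`, inside a square shade with bottom-left corner `(a,b)`. -/
structure Window where
  a : ℤ
  b : ℤ
  l : ℕ
  d : ℕ
  q : ℕ
  hl : 0 < l
  hd : 0 < d
  hq : 2 ≤ q

namespace Window

/-- The side length `s(W) = q·l + (q−1)·d` of the window. -/
def s (W : Window) : ℕ := W.q * W.l + (W.q - 1) * W.d

/-- The `j`-th vertical frame `V_j` of the window. -/
def V (W : Window) (j : ℕ) : Set (ℤ × ℤ) :=
  Rect (W.a + (j * (W.l + W.d) : ℕ)) (W.a + (j * (W.l + W.d) : ℕ) + W.l - 1)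
    W.b (W.b + W.s - 1)

/-- The `j`-th horizontal frame `H_j` of the window. -/
def Hf (W : Window) (j : ℕ) : Set (ℤ × ℤ) :=
  Rect W.a (W.a + W.s - 1)
    (W.b + (j * (W.l + W.d) : ℕ)) (W.b + (j * (W.l + W.d) : ℕ) + W.l - 1)

/-- The fork of the window:
`F(W) = ((⋃_{i=1}^{q−1} V_i) ∪ H_0) \ (V_0 ∪ H_{q−1})`. -/
def fork (W : Window) : Set (ℤ × ℤ) :=
  ((⋃ j ∈ Set.Ico 1 W.q, W.V j) ∪ W.Hf 0) \ (W.V 0 ∪ W.Hf (W.q - 1))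

/-- `W.Prec Wp i j` states that the shade of `W` is the pane of `Wp` in pane
position `(i,j)` (so in particular `s(W) = d(Wp)`); this is the relation
`W ≺ Wp` together with the position data of the pane. -/
def Prec (W Wp : Window) (i j : ℕ) : Prop :=
  i + 1 < Wp.q ∧ j + 1 < Wp.q ∧ W.s = Wp.d ∧
    W.a = Wp.a + (i * (Wp.l + Wp.d) : ℕ) + Wp.l ∧
    W.b = Wp.b + (j * (Wp.l + Wp.d) : ℕ) + Wp.l

end Window

/-- The cut-frame `cut(V_{i+1})` of a window `Wk`: the `(i+1)`-st vertical
frame with the top horizontal frame removed (a `w × (s − w)` rectangle);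
`i` is the pane column of the previous window, so this is the vertical frame
attached to the previous window from the right. -/
def cutRect (Wk : Window) (i : ℕ) : Set (ℤ × ℤ) :=
  Rect (Wk.a + ((i + 1) * (Wk.l + Wk.d) : ℕ))
    (Wk.a + ((i + 1) * (Wk.l + Wk.d) : ℕ) + Wk.l - 1)
    Wk.b (Wk.b + Wk.s - Wk.l - 1)

/-- The extended bottom `E_k` of a window `Wk`: the bottom of its fork,
extended to the right by the frame width `w'` of the next window
(an `(s − w + w') × w` rectangle). -/
def botRect (Wk : Window) (w' : ℕ) : Set (ℤ × ℤ) :=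
  Rect (Wk.a + Wk.l) (Wk.a + Wk.s - 1 + w') Wk.b (Wk.b + Wk.l - 1)

/-- The escape route to the right and to the bottom: for `k ≥ 2`,
`ERB_k = cut(V_k^+) ∪ E_k`, while `ERB_1 = F(W_1) ∪ E_1`. -/
def ERB (W : ℕ → Window) (I : ℕ → ℕ) : ℕ → Set (ℤ × ℤ) := fun k =>
  if k = 1 then (W 1).fork ∪ botRect (W 1) (W 2).l
  else cutRect (W k) (I (k - 1)) ∪ botRect (W k) (W (k + 1)).l

/-!
Where the extended bottom of `W_k` meets the cut-frame of `W_{k+1}` the two crossings of the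
hypothesis share a site `B_k`: a horizontal and a vertical crossing of two rectangles forming a
cross must meet, by a discrete winding-number argument: the signed number of times the horizontal
crossing passes below a site cannot change along a walk avoiding it, yet it is `0` at the bottom
of the vertical crossing and `-1` just above its top. Likewise the cut-frame crossing of `W_k` meets its extended-bottom crossing, so consecutive
sites `B_{k-1}`, `B_k` are joined by an open walk inside `ERB_k`, and `p` is joined to `B_1`
inside `ERB_1`. The cut-frames move off to the right and the extended bottoms move down, so the
concatenated infinite walk visits every site only finitely often, and erasing its loops leaves a
self-avoiding path.
-/

open Filter Function Relation Finset

section Ray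

variable {α : Type*}

def RelIn (r : α → α → Prop) (A : Set α) (x y : α) : Prop :=
  r x y ∧ x ∈ A ∧ y ∈ A

lemma Relation.ReflTransGen.relIn_mono {r : α → α → Prop} {A B : Set α} (h : A ⊆ B) {x y : α}
    (hxy : ReflTransGen (RelIn r A) x y) : ReflTransGen (RelIn r B) x y :=
  ReflTransGen.mono (fun _ _ h' => ⟨h'.1, h h'.2.1, h h'.2.2⟩) _ _ hxy

lemma reflTransGen_of_forall_Ico {r : α → α → Prop} {f : ℤ → α} {m n : ℤ} (hmn : m ≤ n)
    (hf : ∀ t ∈ Set.Ico m n, r (f t) (f (t + 1))) : ReflTransGen r (f m) (f n) :=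
  ReflTransGen.lift f (fun _ _ h => h) _ _
    (reflTransGen_of_succ_of_le (r on f) (by simpa using hf) hmn)

lemma Relation.TransGen.exists_seq {r : α → α → Prop} {a b : α} (h : TransGen r a b) :
    ∃ n, ∃ g : ℕ → α, 0 < n ∧ g 0 = a ∧ g n = b ∧ ∀ i < n, r (g i) (g (i + 1)) := by
  induction h using TransGen.head_induction_on with
  | @single a hab => exact ⟨1, fun i => if i = 0 then a else b, one_pos, rfl, rfl, by simpa⟩
  | @head a c hac _ ih =>
    obtain ⟨n, g, -, rfl, rfl, hg⟩ := ih
    refine ⟨n + 1, fun | 0 => a | i + 1 => g i, n.succ_pos, rfl, rfl, ?_⟩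
    rintro (_ | i) hi
    exacts [hac, hg i (by omega)]

/-- `segPos len n = (k, i)` when the `n`-th step of the concatenation of walks of lengths
`len 0, len 1, …` is the `i`-th step of walk `k`. -/
def segPos (len : ℕ → ℕ) : ℕ → ℕ × ℕ
  | 0 => (0, 0)
  | n + 1 =>
    if (segPos len n).2 + 1 < len (segPos len n).1 then ((segPos len n).1, (segPos len n).2 + 1)
    else ((segPos len n).1 + 1, 0)

section segPos

variable {len : ℕ → ℕ} (hlen : ∀ k, 0 < len k)
include hlen

lemma segPos_snd_lt (n : ℕ) : (segPos len n).2 < len (segPos len n).1 := by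
  induction n with
  | zero => exact hlen 0
  | succ n ih =>
    rw [segPos]
    split_ifs with h
    exacts [h, hlen _]

lemma sum_add_segPos_snd (n : ℕ) :
    ∑ k ∈ range (segPos len n).1, len k + (segPos len n).2 = n := by
  induction n with
  | zero => rfl
  | succ n ih =>
    have := segPos_snd_lt hlen n
    rw [segPos]
    split_ifs
    · dsimp only; omega
    · dsimp only; rw [sum_range_succ]; omega

lemma tendsto_segPos_fst : Tendsto (fun n => (segPos len n).1) atTop atTop := by
  refine tendsto_atTop_atTop.2 fun K => ⟨∑ k ∈ range K, len k, fun n hn => ?_⟩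
  by_contra! hK
  have h := sum_le_sum_of_subset (f := len) (range_subset_range.2 hK)
  rw [sum_range_succ] at h
  have := sum_add_segPos_snd hlen n
  have := segPos_snd_lt hlen n
  omega

end segPos

theorem exists_seq_of_forall_transGen {r : ℕ → α → α → Prop} {z : ℕ → α}
    (hz : ∀ k, TransGen (r k) (z k) (z (k + 1))) :
    ∃ g : ℕ → α, ∃ κ : ℕ → ℕ, g 0 = z 0 ∧ (∀ n, r (κ n) (g n) (g (n + 1))) ∧
      Tendsto κ atTop atTop := by
  choose len seg hlen hseg0 hseg hstep using fun k => (hz k).exists_seq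
  refine ⟨fun n => seg (segPos len n).1 (segPos len n).2, fun n => (segPos len n).1, hseg0 0,
    fun n => ?_, tendsto_segPos_fst hlen⟩
  have hlt := segPos_snd_lt hlen n
  simp only [segPos]
  split_ifs with h
  · exact hstep _ _ hlt
  · rw [hseg0, ← hseg, ← show (segPos len n).2 + 1 = len (segPos len n).1 by omega]
    exact hstep _ _ hlt

theorem exists_injective_of_finite_fibers {r : α → α → Prop} {g : ℕ → α}
    (hg : ∀ n, r (g n) (g (n + 1))) (hfin : ∀ x, {n | g n = x}.Finite) :
    ∃ f : ℕ → α, Injective f ∧ f 0 = g 0 ∧ (∀ n, r (f n) (f (n + 1))) ∧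
      ∀ n, ∃ m, f n = g m := by
  -- loop erasure: from each visited site, continue from the step after its last visit
  set last : ℕ → ℕ := fun m => sSup {n | g n = g m}
  have hlast : ∀ m, g (last m) = g m := fun m =>
    Nat.sSup_mem (s := {n | g n = g m}) ⟨m, rfl⟩ (hfin _).bddAbove
  have le_last : ∀ m m', g m' = g m → m' ≤ last m := fun m _ h => le_csSup (hfin _).bddAbove h
  obtain ⟨t, ht0, ht⟩ : ∃ t : ℕ → ℕ, t 0 = last 0 ∧ ∀ n, t (n + 1) = last (t n + 1) :=
    ⟨fun n => Nat.rec (last 0) (fun _ tn => last (tn + 1)) n, rfl, fun _ => rfl⟩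
  have ht_last : ∀ n m, g m = g (t n) → m ≤ t n := by
    intro n m hm
    obtain ⟨m₀, hm₀⟩ : ∃ m₀, t n = last m₀ := by cases n; exacts [⟨0, ht0⟩, ⟨_, ht _⟩]
    rw [hm₀] at hm ⊢
    exact le_last m₀ m (hm.trans (hlast m₀))
  have hmono : StrictMono t := strictMono_nat_of_lt_succ fun n => by
    rw [ht]; exact le_last _ _ rfl
  refine ⟨g ∘ t, fun a b hab => ?_, by simp [ht0, hlast], fun n => ?_, fun n => ⟨t n, rfl⟩⟩
  · by_contra hne
    rcases lt_or_gt_of_ne hne with h | h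
    · exact (hmono h).not_ge (ht_last a (t b) hab.symm)
    · exact (hmono h).not_ge (ht_last b (t a) hab)
  · simp only [comp, ht, hlast]
    exact hg _

theorem exists_injective_path {r : α → α → Prop} {A : ℕ → Set α} {z : ℕ → α}
    (hz : ∀ k, TransGen (RelIn r (A k)) (z k) (z (k + 1))) (hA : ∀ x, ∀ᶠ k in atTop, x ∉ A k) :
    ∃ f : ℕ → α, Injective f ∧ f 0 = z 0 ∧ (∀ n, r (f n) (f (n + 1))) ∧
      ∀ n, ∃ k, f n ∈ A k := by
  obtain ⟨g, κ, hg0, hg, hκ⟩ := exists_seq_of_forall_transGen hz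
  have hfin : ∀ x, {n | g n = x}.Finite := fun x => by
    have := eventually_cofinite.1 (Nat.cofinite_eq_atTop ▸ hκ.eventually (hA x))
    exact this.subset fun n (hn : g n = x) => not_not.2 (hn ▸ (hg n).2.1)
  obtain ⟨f, hf, hf0, hfr, hfg⟩ := exists_injective_of_finite_fibers (fun n => (hg n).1) hfin
  refine ⟨f, hf, hf0.trans hg0, hfr, fun n => ?_⟩
  obtain ⟨m, hm⟩ := hfg n
  exact ⟨κ m, hm ▸ (hg m).2.1⟩

end Ray

lemma siteAdj_comm {p q : ℤ × ℤ} : SiteAdj p q ↔ SiteAdj q p := by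
  unfold SiteAdj; omega

lemma siteAdj_swap {p q : ℤ × ℤ} : SiteAdj p.swap q.swap ↔ SiteAdj p q := by
  unfold SiteAdj; simp only [Prod.fst_swap, Prod.snd_swap]; omega

instance (A : Set (ℤ × ℤ)) : Std.Symm (RelIn SiteAdj A) :=
  ⟨fun _ _ h => ⟨siteAdj_comm.1 h.1, h.2.2, h.2.1⟩⟩

lemma mem_rect {p : ℤ × ℤ} {x1 x2 y1 y2 : ℤ} :
    p ∈ Rect x1 x2 y1 y2 ↔ x1 ≤ p.1 ∧ p.1 ≤ x2 ∧ y1 ≤ p.2 ∧ p.2 ≤ y2 :=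
  Iff.rfl

lemma reflTransGen_of_mem_rect {x1 x2 y1 y2 : ℤ} {p q : ℤ × ℤ} (hp : p ∈ Rect x1 x2 y1 y2)
    (hq : q ∈ Rect x1 x2 y1 y2) : ReflTransGen (RelIn SiteAdj (Rect x1 x2 y1 y2)) p q := by
  have corner : ∀ q ∈ Rect x1 x2 y1 y2,
      ReflTransGen (RelIn SiteAdj (Rect x1 x2 y1 y2)) (x1, y1) q := by
    rintro ⟨x, y⟩ ⟨h1, h2, h3, h4⟩
    refine (reflTransGen_of_forall_Ico (f := fun t => (t, y1)) h1 fun t ht => ?_).trans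
      (reflTransGen_of_forall_Ico (f := fun t => (x, t)) h3 fun t ht => ?_) <;>
    · have := Set.mem_Ico.1 ht
      refine ⟨by simp [SiteAdj], ?_, ?_⟩ <;> rw [mem_rect] <;> dsimp only <;> omega
  exact (Std.Symm.symm _ _ (corner p hp)).trans (corner q hq)

section Crossing

def quadrant (a b : ℤ) (p : ℤ × ℤ) : ℤ := if p.1 < a ∧ p.2 < b then 1 else 0

/-- Signed number of crossings of the horizontal edges of the walk `H` of length `m` with the
downward vertical ray from the dual vertex `(a - 1/2, b - 1/2)`. -/
def crossNum (H : ℕ → ℤ × ℤ) (m : ℕ) (a b : ℤ) : ℤ :=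
  ∑ i ∈ range m,
    if (H i).2 = (H (i + 1)).2 then quadrant a b (H (i + 1)) - quadrant a b (H i) else 0

lemma quadrant_succ_fst {a b : ℤ} {p : ℤ × ℤ} (h : p.1 ≠ a) :
    quadrant (a + 1) b p = quadrant a b p := by
  unfold quadrant; split_ifs <;> omega

variable {H : ℕ → ℤ × ℤ} {m : ℕ}

lemma crossNum_add_crossNum_swap (hH : ∀ i < m, SiteAdj (H i) (H (i + 1))) (a b : ℤ) :
    crossNum H m a b + crossNum (Prod.swap ∘ H) m b a =
      quadrant a b (H m) - quadrant a b (H 0) := by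
  rw [crossNum, crossNum, ← sum_add_distrib, ← sum_range_sub (fun i => quadrant a b (H i))]
  refine sum_congr rfl fun i hi => ?_
  have := hH i (mem_range.1 hi)
  simp only [comp, Prod.fst_swap, Prod.snd_swap, quadrant, SiteAdj] at this ⊢
  split_ifs <;> omega

lemma crossNum_succ_snd (hH : ∀ i < m, SiteAdj (H i) (H (i + 1))) {q : ℤ × ℤ}
    (hq : ∀ i ≤ m, H i ≠ q) : crossNum H m q.1 (q.2 + 1) = crossNum H m q.1 q.2 := by
  refine sum_congr rfl fun i hi => ?_
  have hi := mem_range.1 hi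
  have h1 := hH i hi
  have h2 := Prod.ext_iff.not.1 (hq i hi.le)
  have h3 := Prod.ext_iff.not.1 (hq (i + 1) hi)
  simp only [quadrant, SiteAdj] at h1 ⊢
  split_ifs <;> omega

lemma crossNum_succ_fst (hH : ∀ i < m, SiteAdj (H i) (H (i + 1))) {q : ℤ × ℤ}
    (hq : ∀ i ≤ m, H i ≠ q) (h0 : (H 0).1 ≠ q.1) (hm : (H m).1 ≠ q.1) :
    crossNum H m (q.1 + 1) q.2 = crossNum H m q.1 q.2 := by
  -- the crossing number of the vertical edges with the leftward ray does not jump either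
  have e1 := crossNum_add_crossNum_swap hH q.1 q.2
  have e2 := crossNum_add_crossNum_swap hH (q.1 + 1) q.2
  have e3 := crossNum_succ_snd (H := Prod.swap ∘ H) (q := q.swap)
    (fun i hi => siteAdj_swap.2 (hH i hi)) fun i hi h => hq i hi (Prod.swap_inj.1 h)
  rw [quadrant_succ_fst h0, quadrant_succ_fst hm] at e2
  simp only [Prod.fst_swap, Prod.snd_swap] at e3
  linarith

lemma crossNum_eq_zero {a b : ℤ} (h : ∀ i ≤ m, b ≤ (H i).2) : crossNum H m a b = 0 :=
  sum_eq_zero fun i hi => by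
    have := h i (mem_range.1 hi).le
    have := h (i + 1) (mem_range.1 hi)
    simp only [quadrant]; split_ifs <;> omega

lemma crossNum_swap_eq_zero {a b : ℤ} (h : ∀ i ≤ m, (H i).2 < b) :
    crossNum (Prod.swap ∘ H) m b a = 0 :=
  sum_eq_zero fun i hi => by
    have := h i (mem_range.1 hi).le
    have := h (i + 1) (mem_range.1 hi)
    simp only [comp, Prod.fst_swap, Prod.snd_swap, quadrant]; split_ifs <;> omega

lemma crossNum_eq_of_siteAdj (hH : ∀ i < m, SiteAdj (H i) (H (i + 1))) {q q' : ℤ × ℤ}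
    (hqq' : SiteAdj q q') (hq : ∀ i ≤ m, H i ≠ q) (hq' : ∀ i ≤ m, H i ≠ q')
    (h0 : (H 0).1 < min q.1 q'.1) (hm : max q.1 q'.1 < (H m).1) :
    crossNum H m q'.1 q'.2 = crossNum H m q.1 q.2 := by
  obtain ⟨hx, hy | hy⟩ | ⟨hy, hx | hx⟩ :
      (q'.1 = q.1 ∧ (q'.2 = q.2 + 1 ∨ q.2 = q'.2 + 1)) ∨
        (q'.2 = q.2 ∧ (q'.1 = q.1 + 1 ∨ q.1 = q'.1 + 1)) := by
    unfold SiteAdj at hqq'; omega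
  · rw [hx, hy, crossNum_succ_snd hH hq]
  · rw [← hx, hy, crossNum_succ_snd hH hq']
  · rw [hx, hy, crossNum_succ_fst hH hq (by omega) (by omega)]
  · rw [hx, ← hy, crossNum_succ_fst hH hq' (by omega) (by omega)]

theorem exists_eq_of_crossing {V : ℕ → ℤ × ℤ} {n : ℕ}
    (hH : ∀ i < m, SiteAdj (H i) (H (i + 1))) (hV : ∀ j < n, SiteAdj (V j) (V (j + 1)))
    (hHy : ∀ i ≤ m, (V 0).2 ≤ (H i).2 ∧ (H i).2 ≤ (V n).2)
    (hVx : ∀ j ≤ n, (H 0).1 < (V j).1 ∧ (V j).1 < (H m).1) :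
    ∃ i ≤ m, ∃ j ≤ n, H i = V j := by
  -- if `H` avoided `V`, its crossing number around `V j` would be `0` for all `j`,
  -- but it is `-1` one step above `V n`
  by_contra! hne
  have hconst : ∀ j ≤ n, crossNum H m (V j).1 (V j).2 = 0 := by
    intro j hj
    induction j with
    | zero => exact crossNum_eq_zero fun i hi => (hHy i hi).1
    | succ j ih =>
      have := hVx j (by omega)
      have := hVx (j + 1) hj
      rw [crossNum_eq_of_siteAdj hH (hV j hj) (fun i hi => hne i hi j (by omega))
        (fun i hi => hne i hi (j + 1) hj) (by omega) (by omega), ih (by omega)]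
  have htop := crossNum_add_crossNum_swap hH (V n).1 ((V n).2 + 1)
  rw [crossNum_swap_eq_zero fun i hi => by linarith [(hHy i hi).2],
    crossNum_succ_snd hH fun i hi => hne i hi n le_rfl, hconst n le_rfl] at htop
  have := hVx n le_rfl
  have := hHy 0 m.zero_le
  simp only [quadrant] at htop
  split_ifs at htop <;> omega

theorem exists_eq_of_crossing' {V : ℕ → ℤ × ℤ} {n : ℕ}
    (hH : ∀ i < m, SiteAdj (H i) (H (i + 1))) (hV : ∀ j < n, SiteAdj (V j) (V (j + 1)))
    (hHx : ∀ i ≤ m, (V 0).1 ≤ (H i).1 ∧ (H i).1 ≤ (V n).1)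
    (hVy : ∀ j ≤ n, (H 0).2 < (V j).2 ∧ (V j).2 < (H m).2) :
    ∃ i ≤ m, ∃ j ≤ n, H i = V j := by
  obtain ⟨i, hi, j, hj, h⟩ := exists_eq_of_crossing (H := Prod.swap ∘ H) (V := Prod.swap ∘ V)
    (fun i hi => siteAdj_swap.2 (hH i hi)) (fun j hj => siteAdj_swap.2 (hV j hj)) hHx hVy
  exact ⟨i, hi, j, hj, Prod.swap_inj.1 h⟩

end Crossing

section Walks

def IsWalkIn (A : Set (ℤ × ℤ)) (n : ℕ) (g : ℕ → ℤ × ℤ) : Prop :=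
  (∀ i < n, SiteAdj (g i) (g (i + 1))) ∧ ∀ i ≤ n, g i ∈ A

lemma IsWalkIn.reflTransGen {A : Set (ℤ × ℤ)} {n : ℕ} {g : ℕ → ℤ × ℤ} (hg : IsWalkIn A n g)
    {i j : ℕ} (hi : i ≤ n) (hj : j ≤ n) : ReflTransGen (RelIn SiteAdj A) (g i) (g j) := by
  wlog hij : i ≤ j generalizing i j
  · exact Std.Symm.symm _ _ (this hj hi (by omega))
  induction j, hij using Nat.le_induction with
  | base => rfl
  | succ j hij ih =>
    exact (ih (by omega)).tail ⟨hg.1 j (by omega), hg.2 j (by omega), hg.2 (j + 1) hj⟩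

lemma IsWalkIn.reflTransGen_of_eq {A B : Set (ℤ × ℤ)} {n n' : ℕ} {g g' : ℕ → ℤ × ℤ}
    (hg : IsWalkIn A n g) (hg' : IsWalkIn B n' g') {i i' : ℕ} (hi : i ≤ n) (hi' : i' ≤ n')
    (heq : g i = g' i') {u u' : ℕ} (hu : u ≤ n) (hu' : u' ≤ n') :
    ReflTransGen (RelIn SiteAdj (A ∪ B)) (g u) (g' u') :=
  ((hg.reflTransGen hu hi).relIn_mono Set.subset_union_left).trans
    (heq ▸ (hg'.reflTransGen hi' hu').relIn_mono Set.subset_union_right)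

lemma isWalkIn_comp_clamp {A : Set (ℤ × ℤ)} {m : ℕ} {f : Fin (m + 1) → ℤ × ℤ}
    (hA : ∀ i, f i ∈ A) (hf : ∀ i : Fin m, SiteAdj (f i.castSucc) (f i.succ)) :
    IsWalkIn A m fun i => f (Fin.clamp i m) := by
  refine ⟨fun i hi => ?_, fun i _ => hA _⟩
  convert hf ⟨i, hi⟩ using 2 <;> ext <;> simp [Fin.clamp] <;> omega

def IsHCrossing (S : Set (ℤ × ℤ)) (x1 x2 y1 y2 : ℤ) (n : ℕ) (g : ℕ → ℤ × ℤ) : Prop :=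
  IsWalkIn (S ∩ Rect x1 x2 y1 y2) n g ∧ (g 0).1 = x1 ∧ (g n).1 = x2

def IsVCrossing (S : Set (ℤ × ℤ)) (x1 x2 y1 y2 : ℤ) (n : ℕ) (g : ℕ → ℤ × ℤ) : Prop :=
  IsWalkIn (S ∩ Rect x1 x2 y1 y2) n g ∧ (g 0).2 = y1 ∧ (g n).2 = y2

variable {S T : Set (ℤ × ℤ)} {x1 x2 y1 y2 x1' x2' y1' y2' : ℤ}

lemma HCross.exists_isHCrossing (h : HCross S x1 x2 y1 y2) :
    ∃ n g, IsHCrossing S x1 x2 y1 y2 n g := by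
  obtain ⟨m, f, hf, hadj, h0, hm⟩ := h
  exact ⟨m, _, isWalkIn_comp_clamp hf hadj, by simpa [Fin.clamp] using h0,
    by simpa [Fin.clamp, Fin.last] using hm⟩

lemma VCross.exists_isVCrossing (h : VCross S x1 x2 y1 y2) :
    ∃ n g, IsVCrossing S x1 x2 y1 y2 n g := by
  obtain ⟨m, f, hf, hadj, h0, hm⟩ := h
  exact ⟨m, _, isWalkIn_comp_clamp hf hadj, by simpa [Fin.clamp] using h0,
    by simpa [Fin.clamp, Fin.last] using hm⟩

lemma exists_isHCrossing_of_subset (h : Rect x1 x2 y1 y2 ⊆ S) (hx : x1 ≤ x2) (hy : y1 ≤ y2) :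
    ∃ n g, IsHCrossing S x1 x2 y1 y2 n g := by
  refine ⟨(x2 - x1).toNat, fun j => (x1 + j, y1), ⟨fun j _ => by simp [SiteAdj], fun j hj => ?_⟩,
    by simp, by simp; omega⟩
  have : (x1 + j, y1) ∈ Rect x1 x2 y1 y2 := by rw [mem_rect]; dsimp only; omega
  exact ⟨h this, this⟩

variable {m n : ℕ} {H V : ℕ → ℤ × ℤ}

lemma IsHCrossing.exists_eq_of_x_lt (hH : IsHCrossing S x1 x2 y1 y2 m H)
    (hV : IsVCrossing T x1' x2' y1' y2' n V) (hx1 : x1 < x1') (hx2 : x2' < x2) (hy1 : y1' ≤ y1)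
    (hy2 : y2 ≤ y2') : ∃ i ≤ m, ∃ j ≤ n, H i = V j := by
  obtain ⟨⟨hHadj, hHmem⟩, hH0, hHm⟩ := hH
  obtain ⟨⟨hVadj, hVmem⟩, hV0, hVn⟩ := hV
  refine exists_eq_of_crossing hHadj hVadj (fun i hi => ?_) fun j hj => ?_
  · have := mem_rect.1 (hHmem i hi).2; omega
  · have := mem_rect.1 (hVmem j hj).2; omega

lemma IsHCrossing.exists_eq_of_y_lt (hH : IsHCrossing S x1 x2 y1 y2 m H)
    (hV : IsVCrossing T x1' x2' y1' y2' n V) (hx1 : x1 ≤ x1') (hx2 : x2' ≤ x2) (hy1 : y1' < y1)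
    (hy2 : y2 < y2') : ∃ i ≤ m, ∃ j ≤ n, H i = V j := by
  obtain ⟨⟨hHadj, hHmem⟩, hH0, hHm⟩ := hH
  obtain ⟨⟨hVadj, hVmem⟩, hV0, hVn⟩ := hV
  obtain ⟨j, hj, i, hi, h⟩ := exists_eq_of_crossing' hVadj hHadj
    (fun j hj => by have := mem_rect.1 (hVmem j hj).2; omega)
    fun i hi => by have := mem_rect.1 (hHmem i hi).2; omega
  exact ⟨i, hi, j, hj, h.symm⟩

end Walks

namespace Window

variable (W : Window)

lemma s_eq : W.s = (W.q - 1) * (W.l + W.d) + W.l := by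
  obtain ⟨q, hq⟩ : ∃ q, W.q = q + 1 := ⟨W.q - 1, by have := W.hq; omega⟩
  rw [s, hq]; simp only [Nat.add_sub_cancel]; ring

lemma cast_s : (W.s : ℤ) = ((W.q - 1) * (W.l + W.d) : ℕ) + W.l := by
  rw [s_eq, Nat.cast_add]

lemma two_mul_l_add_d_le_s : 2 * W.l + W.d ≤ W.s := by
  have : W.l + W.d ≤ (W.q - 1) * (W.l + W.d) := Nat.le_mul_of_pos_left _ (by have := W.hq; omega)
  rw [s_eq]; omega

variable {W} {p : ℤ × ℤ}

lemma le_of_mem_fork (hp : p ∈ W.fork) : W.a + W.l ≤ p.1 ∧ p.1 ≤ W.a + W.s - 1 ∧ W.b ≤ p.2 := by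
  have hs := W.cast_s
  have hld := W.two_mul_l_add_d_le_s
  simp only [fork, V, Hf, Set.mem_sdiff, Set.mem_union, Set.mem_iUnion, Set.mem_Ico, mem_rect,
    zero_mul, Nat.cast_zero, add_zero] at hp
  obtain ⟨⟨j, ⟨hj1, hj2⟩, h⟩ | h, hout⟩ := hp
  · have : W.l + W.d ≤ j * (W.l + W.d) := Nat.le_mul_of_pos_left _ hj1
    have : j * (W.l + W.d) ≤ (W.q - 1) * (W.l + W.d) := Nat.mul_le_mul_right _ (by omega)
    omega
  · omega

lemma mem_fork_of_le (hp : p ∈ W.fork) {y : ℤ} (hy : W.b ≤ y) (hyp : y ≤ p.2) :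
    (p.1, y) ∈ W.fork := by
  have hs := W.cast_s
  have hld := W.two_mul_l_add_d_le_s
  have hlow := le_of_mem_fork hp
  simp only [fork, V, Hf, Set.mem_sdiff, Set.mem_union, Set.mem_iUnion, Set.mem_Ico, mem_rect,
    zero_mul, Nat.cast_zero, add_zero] at hp ⊢
  obtain ⟨⟨j, hj, h⟩ | h, hout⟩ := hp
  · exact ⟨Or.inl ⟨j, hj, by omega⟩, by omega⟩
  · have : W.l + W.d ≤ (W.q - 1) * (W.l + W.d) :=
      Nat.le_mul_of_pos_left _ (by have := W.hq; omega)
    exact ⟨Or.inr (by omega), by omega⟩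

lemma transGen_of_mem_fork {w : ℕ} {p q : ℤ × ℤ} (hp : p ∈ W.fork) (hq : q ∈ botRect W w)
    (hx : W.a + W.s ≤ q.1) : TransGen (RelIn SiteAdj (W.fork ∪ botRect W w)) p q := by
  obtain ⟨hp1, hp2, hpb⟩ := le_of_mem_fork hp
  have hcol : ReflTransGen (RelIn SiteAdj W.fork) (p.1, W.b) p := by
    simpa using reflTransGen_of_forall_Ico (f := fun t => (p.1, t)) hpb fun t ⟨h1, h2⟩ =>
      ⟨by simp [SiteAdj], mem_fork_of_le hp h1 h2.le, mem_fork_of_le hp (by omega) h2⟩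
  have hrow : ReflTransGen (RelIn SiteAdj (botRect W w)) (p.1, W.b) q :=
    reflTransGen_of_mem_rect (mem_rect.2 (by dsimp only; have := W.hl; omega)) hq
  refine (reflTransGen_iff_eq_or_transGen.1 ((Std.Symm.symm _ _
    (hcol.relIn_mono Set.subset_union_left)).trans
      (hrow.relIn_mono Set.subset_union_right))).resolve_left ?_
  rintro rfl
  omega

namespace Prec

variable {W' : Window} {i j : ℕ} (h : W.Prec W' i j)
include h

lemma cut_left_eq : W'.a + ((i + 1) * (W'.l + W'.d) : ℕ) = W.a + W.s := by
  obtain ⟨-, -, hs, ha, -⟩ := h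
  rw [ha, hs]; push_cast; ring

lemma cutRect_eq :
    cutRect W' i = Rect (W.a + W.s) (W.a + W.s + W'.l - 1) W'.b (W'.b + W'.s - W'.l - 1) := by
  rw [cutRect, h.cut_left_eq]

lemma a_add_l_lt : W'.a + W'.l < W.a + W.s := by
  obtain ⟨-, -, -, ha, -⟩ := h
  have := W.two_mul_l_add_d_le_s
  have := W.hl
  omega

lemma a_add_s_add_l_le : W.a + W.s + W'.l ≤ W'.a + W'.s := by
  have := h.cut_left_eq
  have := W'.cast_s
  have : (i + 1) * (W'.l + W'.d) ≤ (W'.q - 1) * (W'.l + W'.d) :=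
    Nat.mul_le_mul_right _ (by have := h.1; omega)
  omega

lemma b_add_l_le : W'.b + W'.l ≤ W.b := by
  obtain ⟨-, -, -, -, hb⟩ := h
  omega

lemma b_add_l_lt : W.b + W.l < W'.b + W'.s - W'.l := by
  obtain ⟨-, hj, hs, -, hb⟩ := h
  have : (j + 1) * (W'.l + W'.d) ≤ (W'.q - 1) * (W'.l + W'.d) := Nat.mul_le_mul_right _ (by omega)
  have : (j + 1) * (W'.l + W'.d) = j * (W'.l + W'.d) + W'.l + W'.d := by ring
  have := W.two_mul_l_add_d_le_s
  have := W.hd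
  have := W'.cast_s
  omega

variable {S : Set (ℤ × ℤ)} {m n : ℕ} {H V : ℕ → ℤ × ℤ}

lemma exists_bot_eq_cut
    (hH : IsHCrossing S (W.a + W.l) (W.a + W.s - 1 + W'.l) W.b (W.b + W.l - 1) m H)
    (hV : IsVCrossing S (W.a + W.s) (W.a + W.s + W'.l - 1) W'.b (W'.b + W'.s - W'.l - 1) n V) :
    ∃ w ≤ m, ∃ u ≤ n, H w = V u := by
  have := W.two_mul_l_add_d_le_s
  have := h.b_add_l_le
  have := h.b_add_l_lt
  have := W'.hl
  exact hH.exists_eq_of_y_lt hV (by omega) (by omega) (by omega) (by omega)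

lemma transGen_cut_bot (W'' : Window)
    (hV : IsVCrossing S (W.a + W.s) (W.a + W.s + W'.l - 1) W'.b (W'.b + W'.s - W'.l - 1) n V)
    (hH : IsHCrossing S (W'.a + W'.l) (W'.a + W'.s - 1 + W''.l) W'.b (W'.b + W'.l - 1) m H)
    {u w : ℕ} (hu : u ≤ n) (hw : w ≤ m) (hx : W'.a + W'.s ≤ (H w).1) :
    TransGen (RelIn SiteAdj (S ∩ (cutRect W' i ∪ botRect W' W''.l))) (V u) (H w) := by
  rw [h.cutRect_eq, Set.inter_union_distrib_left]
  have := h.a_add_s_add_l_le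
  have := W''.hl
  have := W'.two_mul_l_add_d_le_s
  obtain ⟨w₀, hw₀, u₀, hu₀, hmeet⟩ :=
    hH.exists_eq_of_x_lt hV h.a_add_l_lt (by omega) le_rfl (by omega)
  refine (reflTransGen_iff_eq_or_transGen.1
    (hV.1.reflTransGen_of_eq hH.1 hu₀ hw₀ hmeet.symm hu hw)).resolve_left fun heq => ?_
  have := mem_rect.1 (hV.1.2 u hu).2
  rw [heq] at hx
  omega

end Prec

end Window

section EscapeRoute

variable {W : ℕ → Window} {I J : ℕ → ℕ}

lemma ERB_add_two (k : ℕ) :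
    ERB W I (k + 2) = cutRect (W (k + 2)) (I (k + 1)) ∪ botRect (W (k + 2)) (W (k + 3)).l :=
  rfl

variable (hchain : ∀ k, 1 ≤ k → (W k).Prec (W (k + 1)) (I k) (J k))
include hchain

lemma eventually_not_mem_ERB (x : ℤ × ℤ) : ∀ᶠ k in atTop, x ∉ ERB W I (k + 1) := by
  have hgrow : ∀ k, 1 ≤ k →
      (W 1).a + (W 1).s + k ≤ (W k).a + (W k).s + 1 ∧ (W k).b + k ≤ (W 1).b + 1 := by
    intro k hk
    induction k, hk using Nat.le_induction with
    | base => simp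
    | succ k hk ih =>
      have := (hchain k hk).a_add_s_add_l_le
      have := (hchain k hk).b_add_l_le
      have := (W (k + 1)).hl
      push_cast
      omega
  refine eventually_atTop.2 ⟨(x.1 - (W 1).a - (W 1).s).toNat + ((W 1).b - x.2).toNat + 2,
    fun k hk hx => ?_⟩
  obtain ⟨k, rfl⟩ : ∃ k', k = k' + 1 := ⟨k - 1, by omega⟩
  have h : (W (k + 1)).Prec (W (k + 2)) (I (k + 1)) (J (k + 1)) := hchain (k + 1) (by omega)
  have := hgrow (k + 1) (by omega)
  have := h.b_add_l_le
  rw [ERB_add_two, h.cutRect_eq] at hx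
  rcases hx with hx | hx <;> have := mem_rect.1 hx <;> omega

theorem exists_transGen_ERB {S : Set (ℤ × ℤ)} {p : ℤ × ℤ} (hERB1 : ERB W I 1 ⊆ S)
    (hv : ∀ k, 2 ≤ k →
      VCross S ((W k).a + ((I (k - 1) + 1) * ((W k).l + (W k).d) : ℕ))
        ((W k).a + ((I (k - 1) + 1) * ((W k).l + (W k).d) : ℕ) + (W k).l - 1)
        ((W k).b) ((W k).b + (W k).s - (W k).l - 1))
    (hh : ∀ k, 2 ≤ k →
      HCross S ((W k).a + (W k).l) ((W k).a + (W k).s - 1 + (W (k + 1)).l)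
        ((W k).b) ((W k).b + (W k).l - 1))
    (hp : p ∈ (W 1).fork) :
    ∃ z : ℕ → ℤ × ℤ, z 0 = p ∧
      ∀ k, TransGen (RelIn SiteAdj (S ∩ ERB W I (k + 1))) (z k) (z (k + 1)) := by
  have hP : ∀ k, (W (k + 1)).Prec (W (k + 2)) (I (k + 1)) (J (k + 1)) :=
    fun k => hchain _ k.succ_pos
  -- for `k = 0` there is no hypothesis `hh`: the lowest row of `ERB_1 ⊆ S` is a crossing
  have hH : ∀ k, ∃ n g, IsHCrossing S ((W (k + 1)).a + (W (k + 1)).l)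
      ((W (k + 1)).a + (W (k + 1)).s - 1 + (W (k + 2)).l) (W (k + 1)).b
      ((W (k + 1)).b + (W (k + 1)).l - 1) n g := by
    rintro (_ | k)
    · simp only [Nat.zero_add]
      have := (W 1).two_mul_l_add_d_le_s
      have := (W 1).hl
      exact exists_isHCrossing_of_subset (fun x hx => hERB1 (Or.inr hx)) (by omega) (by omega)
    · exact (hh (k + 2) (by omega)).exists_isHCrossing
  have hV : ∀ k, ∃ n g, IsVCrossing S ((W (k + 1)).a + (W (k + 1)).s)
      ((W (k + 1)).a + (W (k + 1)).s + (W (k + 2)).l - 1) (W (k + 2)).b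
      ((W (k + 2)).b + (W (k + 2)).s - (W (k + 2)).l - 1) n g := fun k => by
    have := hv (k + 2) (by omega)
    rw [show k + 2 - 1 = k + 1 from rfl, (hP k).cut_left_eq] at this
    exact this.exists_isVCrossing
  choose nH H hH using hH
  choose nV V hV using hV
  choose wB hwB uB huB hB using fun k => (hP k).exists_bot_eq_cut (hH k) (hV k)
  have hBx : ∀ k, (W (k + 1)).a + (W (k + 1)).s ≤ (H k (wB k)).1 := fun k => by
    have := mem_rect.1 ((hV k).1.2 _ (huB k)).2
    rw [hB k]
    omega
  refine ⟨fun | 0 => p | k + 1 => H k (wB k), rfl, ?_⟩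
  rintro (_ | k)
  · rw [Set.inter_eq_right.2 hERB1]
    exact (W 1).transGen_of_mem_fork hp ((hH 0).1.2 _ (hwB 0)).2 (hBx 0)
  · show TransGen _ (H k (wB k)) (H (k + 1) (wB (k + 1)))
    rw [hB k]
    exact (hP k).transGen_cut_bot (W (k + 3)) (hV k) (hH (k + 1)) (huB k) (hwB (k + 1))
      (hBx (k + 1))

end EscapeRoute

/-- Given a chain `W_1 ≺ W_2 ≺ ⋯` of windows, if a set `S` of
open sites contains all of `ERB_1`, and for each `k ≥ 2` contains a vertical
crossing of the cut-frame of `ERB_k` and a horizontal crossing of the extended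
bottom of `ERB_k`, then from every point of the fork `F(W_1)` there is an
infinite self-avoiding open path to infinity inside `⋃_{k≥1} ERB_k`. -/
theorem road_gives_infinite_path (W : ℕ → Window) (I J : ℕ → ℕ)
    (hchain : ∀ k, 1 ≤ k → (W k).Prec (W (k + 1)) (I k) (J k))
    (S : Set (ℤ × ℤ))
    (hERB1 : ERB W I 1 ⊆ S)
    (hv : ∀ k, 2 ≤ k →
      VCross S ((W k).a + ((I (k - 1) + 1) * ((W k).l + (W k).d) : ℕ))
        ((W k).a + ((I (k - 1) + 1) * ((W k).l + (W k).d) : ℕ) + (W k).l - 1)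
        ((W k).b) ((W k).b + (W k).s - (W k).l - 1))
    (hh : ∀ k, 2 ≤ k →
      HCross S ((W k).a + (W k).l) ((W k).a + (W k).s - 1 + (W (k + 1)).l)
        ((W k).b) ((W k).b + (W k).l - 1)) :
    ∀ p ∈ (W 1).fork, ∃ f : ℕ → ℤ × ℤ, Function.Injective f ∧ f 0 = p ∧
      (∀ n, SiteAdj (f n) (f (n + 1))) ∧
      ∀ n, f n ∈ S ∧ ∃ k, 1 ≤ k ∧ f n ∈ ERB W I k := by
  intro p hp
  obtain ⟨z, rfl, hz⟩ := exists_transGen_ERB hchain hERB1 hv hh hp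
  obtain ⟨f, hf, hf0, hfadj, hfA⟩ := exists_injective_path hz fun x =>
    (eventually_not_mem_ERB hchain x).mono fun _ hk hx => hk hx.2
  refine ⟨f, hf, hf0, hfadj, fun n => ?_⟩
  obtain ⟨k, hS, hk⟩ := hfA n
  exact ⟨hS, k + 1, k.succ_pos, hk⟩
end

section
/- If (R_m) is a well-joined sequence of rectangles with alternating types starting with V→H, and a subgraph of Z² contains a vertical crossing of R_{2k−1} and a horizontal crossing of R_{2k} for every k, then the subgraph contains an infinite path (an infinite connected subgraph meeting every R_m). -/
/-!
Consecutive crossings meet by a discrete Jordan curve argument. For a horizontal crossing `w` of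
the wide rectangle, extended by one step beyond each end, the parity of the number of edges of `w`
crossing the downward ray below a site (`rayParity`) cannot change along a walk that avoids `w`
and stays strictly between the end columns of `w`. Along a vertical crossing of the tall
rectangle this parity would be `0` at the bottom end, whose ray misses `w`, and `1` at the top
end, whose ray meets every edge where `w` changes column across it. Hence the crossings meet, and
the union of all crossings is a chain of connected sets, each meeting the next.
-/

open SimpleGraph

def siteGraph : SimpleGraph (ℤ × ℤ) where
  Adj := SiteAdj
  symm := ⟨fun _ _ h => by unfold SiteAdj at *; omega⟩
  loopless := ⟨fun _ h => by simp [SiteAdj] at h⟩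

@[simp]
theorem siteGraph_adj {p q : ℤ × ℤ} : siteGraph.Adj p q ↔ SiteAdj p q := Iff.rfl

theorem SimpleGraph.Walk.sum_darts_sub {V M : Type*} [AddCommGroup M] {G : SimpleGraph V}
    (φ : V → M) {u v : V} (w : G.Walk u v) :
    (w.darts.map fun d => φ d.snd - φ d.fst).sum = φ v - φ u := by
  induction w with
  | nil => simp
  | cons _ _ ih => simp [ih]

/-- The edge `xy` crosses the downward vertical ray starting at `(p.1 - 1/2, p.2 + 1/2)`. -/
def CrossesRay (p x y : ℤ × ℤ) : Prop :=
  x.2 = y.2 ∧ x.2 ≤ p.2 ∧ (x.1 + 1 = p.1 ∧ y.1 = p.1 ∨ x.1 = p.1 ∧ y.1 + 1 = p.1)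

instance (p x y : ℤ × ℤ) : Decidable (CrossesRay p x y) := by
  unfold CrossesRay; infer_instance

/-- An edge avoiding `(a, b)` leaves the half-column `{a} × (-∞, b]` iff it crosses the ray of
`(a, b)` or that of `(a + 1, b)`. -/
theorem crossesRay_add_crossesRay_right {a b : ℤ} {x y : ℤ × ℤ} (hxy : SiteAdj x y)
    (hx : x ≠ (a, b)) (hy : y ≠ (a, b)) :
    ((if CrossesRay (a, b) x y then 1 else 0 : ZMod 2) +
        if CrossesRay (a + 1, b) x y then 1 else 0) =
      (if y.1 = a ∧ y.2 ≤ b then 1 else 0) - if x.1 = a ∧ x.2 ≤ b then 1 else 0 := by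
  obtain ⟨x1, x2⟩ := x
  obtain ⟨y1, y2⟩ := y
  split_ifs <;> simp only [SiteAdj, CrossesRay, ne_eq, Prod.mk.injEq] at * <;>
    first | decide | omega

theorem crossesRay_up_iff {a b : ℤ} {x y : ℤ × ℤ} (hx : x ≠ (a, b + 1)) (hy : y ≠ (a, b + 1)) :
    CrossesRay (a, b + 1) x y ↔ CrossesRay (a, b) x y := by
  obtain ⟨x1, x2⟩ := x
  obtain ⟨y1, y2⟩ := y
  simp only [CrossesRay, ne_eq, Prod.mk.injEq] at *
  omega

theorem crossesRay_of_le {p x y : ℤ × ℤ} (hxy : SiteAdj x y) (hx : x.2 ≤ p.2) :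
    (if CrossesRay p x y then 1 else 0 : ZMod 2) =
      (if p.1 ≤ y.1 then 1 else 0) - if p.1 ≤ x.1 then 1 else 0 := by
  obtain ⟨x1, x2⟩ := x
  obtain ⟨y1, y2⟩ := y
  split_ifs <;> simp only [SiteAdj, CrossesRay] at * <;> first | decide | omega

theorem not_crossesRay_of_ge {p x y : ℤ × ℤ} (hx : p.2 ≤ x.2) (hxp : x ≠ p) (hyp : y ≠ p) :
    ¬CrossesRay p x y := by
  obtain ⟨x1, x2⟩ := x
  obtain ⟨y1, y2⟩ := y
  simp only [CrossesRay, ne_eq, Prod.ext_iff] at *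
  omega

section RayParity

variable {u v : ℤ × ℤ} (w : siteGraph.Walk u v)

def rayParity (p : ℤ × ℤ) : ZMod 2 :=
  (w.darts.map fun d => if CrossesRay p d.fst d.snd then 1 else 0).sum

theorem rayParity_add_rayParity_right {a b : ℤ} (hw : (a, b) ∉ w.support) (hu : u.1 ≠ a)
    (hv : v.1 ≠ a) : rayParity w (a, b) + rayParity w (a + 1, b) = 0 := by
  have hstrip := w.sum_darts_sub fun x => (if x.1 = a ∧ x.2 ≤ b then 1 else 0 : ZMod 2)
  rw [rayParity, rayParity, ← List.sum_map_add, List.map_congr_left fun d hd => crossesRay_add_crossesRay_right d.adj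
    (ne_of_mem_of_not_mem (w.dart_fst_mem_support_of_mem_darts hd) hw)
    (ne_of_mem_of_not_mem (w.dart_snd_mem_support_of_mem_darts hd) hw)]
  simp [hstrip, hu, hv]

theorem rayParity_up {a b : ℤ} (hw : (a, b + 1) ∉ w.support) :
    rayParity w (a, b + 1) = rayParity w (a, b) := by
  refine congrArg List.sum (List.map_congr_left fun d hd => ?_)
  simp only [crossesRay_up_iff (ne_of_mem_of_not_mem (w.dart_fst_mem_support_of_mem_darts hd) hw)
    (ne_of_mem_of_not_mem (w.dart_snd_mem_support_of_mem_darts hd) hw)]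

theorem rayParity_eq_of_adj {x y : ℤ × ℤ} (hxy : SiteAdj x y) (hx : x ∉ w.support)
    (hy : y ∉ w.support) (hux : u.1 ≠ x.1) (huy : u.1 ≠ y.1) (hvx : v.1 ≠ x.1)
    (hvy : v.1 ≠ y.1) : rayParity w x = rayParity w y := by
  obtain ⟨x1, x2⟩ := x
  obtain ⟨y1, y2⟩ := y
  have hdir : (y1 = x1 + 1 ∧ y2 = x2) ∨ (x1 = y1 + 1 ∧ x2 = y2) ∨
      (x1 = y1 ∧ y2 = x2 + 1) ∨ (x1 = y1 ∧ x2 = y2 + 1) := by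
    unfold SiteAdj at hxy; omega
  rcases hdir with ⟨rfl, rfl⟩ | ⟨rfl, rfl⟩ | ⟨rfl, rfl⟩ | ⟨rfl, rfl⟩
  · exact CharTwo.add_eq_zero.1 (rayParity_add_rayParity_right w hx hux hvx)
  · exact (CharTwo.add_eq_zero.1 (rayParity_add_rayParity_right w hy huy hvy)).symm
  · exact (rayParity_up w hy).symm
  · exact rayParity_up w hx

theorem rayParity_eq_of_forall_le {p : ℤ × ℤ} (hw : ∀ x ∈ w.support, x.2 ≤ p.2) :
    rayParity w p = (if p.1 ≤ v.1 then 1 else 0) - if p.1 ≤ u.1 then 1 else 0 := by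
  rw [rayParity, List.map_congr_left fun d hd => crossesRay_of_le d.adj
    (hw _ (w.dart_fst_mem_support_of_mem_darts hd))]
  exact w.sum_darts_sub fun x => (if p.1 ≤ x.1 then 1 else 0 : ZMod 2)

theorem rayParity_eq_zero_of_forall_ge {p : ℤ × ℤ} (hw : ∀ x ∈ w.support, p.2 ≤ x.2)
    (hp : p ∉ w.support) : rayParity w p = 0 := by
  refine List.sum_eq_zero fun c hc => ?_
  obtain ⟨d, hd, rfl⟩ := List.mem_map.1 hc
  have hfst := w.dart_fst_mem_support_of_mem_darts hd
  rw [if_neg (not_crossesRay_of_ge (hw _ hfst) (ne_of_mem_of_not_mem hfst hp)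
    (ne_of_mem_of_not_mem (w.dart_snd_mem_support_of_mem_darts hd) hp))]

end RayParity

theorem rayParity_eq_of_walk {u v x y : ℤ × ℤ} (w : siteGraph.Walk u v) (p : siteGraph.Walk x y)
    (hdisj : ∀ z ∈ p.support, z ∉ w.support) (hcol : ∀ z ∈ p.support, u.1 ≠ z.1 ∧ v.1 ≠ z.1) :
    rayParity w x = rayParity w y := by
  induction p with
  | nil => rfl
  | @cons x x' y h p ih =>
    have hx := hcol x p.support.mem_cons_self
    have hx' := hcol x' (List.mem_cons_of_mem _ p.start_mem_support)
    rw [rayParity_eq_of_adj w h (hdisj x p.support.mem_cons_self)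
      (hdisj x' (List.mem_cons_of_mem _ p.start_mem_support)) hx.1 hx'.1 hx.2 hx'.2]
    exact ih (fun z hz => hdisj z (List.mem_cons_of_mem _ hz))
      (fun z hz => hcol z (List.mem_cons_of_mem _ hz))

theorem exists_mem_support_of_crossing {u v x y : ℤ × ℤ} (w : siteGraph.Walk u v)
    (p : siteGraph.Walk x y) (hbot : ∀ z ∈ w.support, x.2 ≤ z.2)
    (htop : ∀ z ∈ w.support, z.2 ≤ y.2) (hcol : ∀ z ∈ p.support, u.1 < z.1 ∧ z.1 < v.1) :
    ∃ z ∈ p.support, z ∈ w.support := by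
  by_contra! hdisj
  have hx := rayParity_eq_zero_of_forall_ge w hbot (hdisj x p.start_mem_support)
  have hy := rayParity_eq_of_forall_le w htop
  have hycol := hcol y p.end_mem_support
  rw [← rayParity_eq_of_walk w p hdisj fun z hz => ⟨(hcol z hz).1.ne, (hcol z hz).2.ne'⟩, hx,
    if_pos hycol.2.le, if_neg (not_le.2 hycol.1)] at hy
  exact absurd hy (by decide)

theorem exists_mem_support_of_vertical_horizontal {ax1 ax2 ay1 ay2 bx1 bx2 by1 by2 : ℤ}
    (hx1 : bx1 ≤ ax1) (hx2 : ax2 ≤ bx2) (hy1 : ay1 ≤ by1) (hy2 : by2 ≤ ay2)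
    {x y u v : ℤ × ℤ} (p : siteGraph.Walk x y) (hp : ∀ z ∈ p.support, z ∈ Rect ax1 ax2 ay1 ay2)
    (hx : x.2 = ay1) (hy : y.2 = ay2) (w : siteGraph.Walk u v)
    (hw : ∀ z ∈ w.support, z ∈ Rect bx1 bx2 by1 by2) (hu : u.1 = bx1) (hv : v.1 = bx2) :
    ∃ z ∈ p.support, z ∈ w.support := by
  have hu' : siteGraph.Adj (u.1 - 1, u.2) u := by simp [SiteAdj]
  have hv' : siteGraph.Adj v (v.1 + 1, v.2) := by simp [SiteAdj]
  -- Extending `w` by one step at each end puts its endpoints strictly outside the columns of `p`.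
  let w' := Walk.cons hu' (w.concat hv')
  have hw' : ∀ z ∈ w'.support, z = (u.1 - 1, u.2) ∨ z ∈ w.support ∨ z = (v.1 + 1, v.2) := by
    simp [w', Walk.support_concat]
  have hrows : ∀ z ∈ w'.support, by1 ≤ z.2 ∧ z.2 ≤ by2 := by
    intro z hz
    rcases hw' z hz with rfl | hz | rfl
    · obtain ⟨-, -, h1, h2⟩ := hw u w.start_mem_support; exact ⟨h1, h2⟩
    · obtain ⟨-, -, h1, h2⟩ := hw z hz; exact ⟨h1, h2⟩
    · obtain ⟨-, -, h1, h2⟩ := hw v w.end_mem_support; exact ⟨h1, h2⟩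
  obtain ⟨z, hzp, hzw'⟩ := exists_mem_support_of_crossing w' p
    (fun z hz => by have := hrows z hz; omega) (fun z hz => by have := hrows z hz; omega)
    (fun z hz => by obtain ⟨h1, h2, -, -⟩ := hp z hz; omega)
  obtain ⟨h1, h2, -, -⟩ := hp z hzp
  rcases hw' z hzw' with rfl | hzw | rfl
  · omega
  · exact ⟨z, hzp, hzw⟩
  · omega

theorem exists_walk_of_fin_path {m : ℕ} (f : Fin (m + 1) → ℤ × ℤ)
    (hf : ∀ i : Fin m, SiteAdj (f i.castSucc) (f i.succ)) :
    ∃ w : siteGraph.Walk (f 0) (f (Fin.last m)), ∀ z ∈ w.support, ∃ i, f i = z := by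
  induction m with
  | zero => exact ⟨Walk.nil, by simp⟩
  | succ m ih =>
    obtain ⟨w, hw⟩ := ih (fun i => f i.succ) fun i => by simpa using hf i.succ
    refine ⟨Walk.cons (by simpa using hf 0) (w.copy rfl (by simp)), ?_⟩
    simp only [Walk.support_cons, Walk.support_copy, List.mem_cons]
    rintro z (rfl | hz)
    · exact ⟨0, rfl⟩
    · obtain ⟨i, rfl⟩ := hw z hz
      exact ⟨i.succ, rfl⟩

theorem VCross.exists_walk {S : Set (ℤ × ℤ)} {x1 x2 y1 y2 : ℤ} (h : VCross S x1 x2 y1 y2) :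
    ∃ (u v : ℤ × ℤ) (w : siteGraph.Walk u v),
      (∀ z ∈ w.support, z ∈ S ∧ z ∈ Rect x1 x2 y1 y2) ∧ u.2 = y1 ∧ v.2 = y2 := by
  obtain ⟨m, f, hfS, hf, h0, hlast⟩ := h
  obtain ⟨w, hw⟩ := exists_walk_of_fin_path f hf
  refine ⟨_, _, w, fun z hz => ?_, h0, hlast⟩
  obtain ⟨i, rfl⟩ := hw z hz
  exact hfS i

theorem HCross.exists_walk {S : Set (ℤ × ℤ)} {x1 x2 y1 y2 : ℤ} (h : HCross S x1 x2 y1 y2) :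
    ∃ (u v : ℤ × ℤ) (w : siteGraph.Walk u v),
      (∀ z ∈ w.support, z ∈ S ∧ z ∈ Rect x1 x2 y1 y2) ∧ u.1 = x1 ∧ v.1 = x2 := by
  obtain ⟨m, f, hfS, hf, h0, hlast⟩ := h
  obtain ⟨w, hw⟩ := exists_walk_of_fin_path f hf
  refine ⟨_, _, w, fun z hz => ?_, h0, hlast⟩
  obtain ⟨i, rfl⟩ := hw z hz
  exact hfS i

theorem exists_fin_path_of_reachable {T : Set (ℤ × ℤ)} {p q : ℤ × ℤ} {hp : p ∈ T} {hq : q ∈ T}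
    (h : (siteGraph.induce T).Reachable ⟨p, hp⟩ ⟨q, hq⟩) :
    ∃ m : ℕ, ∃ f : Fin (m + 1) → ℤ × ℤ,
      f 0 = p ∧ f (Fin.last m) = q ∧ (∀ i, f i ∈ T) ∧
      ∀ i : Fin m, SiteAdj (f i.castSucc) (f i.succ) := by
  obtain ⟨w⟩ := h
  exact ⟨w.length, fun i => w.getVert i, by simp, by simp, fun i => (w.getVert i).2,
    fun i => w.adj_getVert_succ i.2⟩

theorem SimpleGraph.induce_iUnion_connected_of_chain {V : Type*} {G : SimpleGraph V}
    {C : ℕ → Set V} (hC : ∀ k, (G.induce (C k)).Connected)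
    (hmeet : ∀ k, (C k ∩ C (k + 1)).Nonempty) : (G.induce (⋃ k, C k)).Connected := by
  have hacc : ∀ k, (G.induce (Set.accumulate C k)).Connected := by
    intro k
    induction k with
    | zero => rw [Set.accumulate_zero_nat]; exact hC 0
    | succ k ih =>
      rw [Set.accumulate_succ]
      exact induce_union_connected ih.preconnected (hC (k + 1)).preconnected
        ((hmeet k).mono (Set.inter_subset_inter_left _ Set.subset_accumulate))
  obtain ⟨u, hu⟩ := (hC 0).nonempty
  refine G.induce_connected_of_patches u (Set.mem_iUnion_of_mem 0 hu) fun {v} hv => ?_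
  obtain ⟨k, hvk⟩ := Set.mem_iUnion.1 hv
  refine ⟨Set.accumulate C k, Set.accumulate_subset_iUnion k,
    Set.monotone_accumulate (Nat.zero_le k) (Set.accumulate_zero_nat C ▸ hu),
    Set.subset_accumulate hvk, ?_⟩
  exact (hacc k).preconnected _ _

section WellJoined

variable (xlo xhi ylo yhi : ℕ → ℤ)

theorem exists_crossing_walk {S : Set (ℤ × ℤ)}
    (hv : ∀ k, 1 ≤ k →
      VCross S (xlo (2 * k - 1)) (xhi (2 * k - 1)) (ylo (2 * k - 1)) (yhi (2 * k - 1)))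
    (hh : ∀ k, 1 ≤ k → HCross S (xlo (2 * k)) (xhi (2 * k)) (ylo (2 * k)) (yhi (2 * k)))
    (k : ℕ) :
    ∃ (u v : ℤ × ℤ) (w : siteGraph.Walk u v),
      (∀ z ∈ w.support, z ∈ S ∧ z ∈ Rect (xlo (k + 1)) (xhi (k + 1)) (ylo (k + 1)) (yhi (k + 1))) ∧
      (Even k → u.2 = ylo (k + 1) ∧ v.2 = yhi (k + 1)) ∧
      (Odd k → u.1 = xlo (k + 1) ∧ v.1 = xhi (k + 1)) := by
  obtain ⟨j, rfl | rfl⟩ := Nat.even_or_odd' k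
  · have hj : 2 * (j + 1) - 1 = 2 * j + 1 := by omega
    obtain ⟨u, v, w, hw, hu, hv⟩ := (hj ▸ hv (j + 1) le_add_self).exists_walk
    exact ⟨u, v, w, hw, fun _ => ⟨hu, hv⟩, fun h => absurd h (by simp)⟩
  · have hj : 2 * (j + 1) = 2 * j + 1 + 1 := by omega
    obtain ⟨u, v, w, hw, hu, hv⟩ := (hj ▸ hh (j + 1) le_add_self).exists_walk
    exact ⟨u, v, w, hw, fun h => absurd h (by simp), fun _ => ⟨hu, hv⟩⟩

theorem exists_mem_support_of_consecutive_crossings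
    (hodd : ∀ m, 1 ≤ m → Odd m →
      xlo (m + 1) ≤ xlo m ∧ xhi m ≤ xhi (m + 1) ∧
      ylo m ≤ ylo (m + 1) ∧ yhi (m + 1) ≤ yhi m)
    (heven : ∀ m, 1 ≤ m → Even m →
      xlo m ≤ xlo (m + 1) ∧ xhi (m + 1) ≤ xhi m ∧
      ylo (m + 1) ≤ ylo m ∧ yhi m ≤ yhi (m + 1))
    {k : ℕ} {u v u' v' : ℤ × ℤ} (w : siteGraph.Walk u v) (w' : siteGraph.Walk u' v')
    (hw : ∀ z ∈ w.support, z ∈ Rect (xlo (k + 1)) (xhi (k + 1)) (ylo (k + 1)) (yhi (k + 1)))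
    (hwV : Even k → u.2 = ylo (k + 1) ∧ v.2 = yhi (k + 1))
    (hwH : Odd k → u.1 = xlo (k + 1) ∧ v.1 = xhi (k + 1))
    (hw' : ∀ z ∈ w'.support,
      z ∈ Rect (xlo (k + 1 + 1)) (xhi (k + 1 + 1)) (ylo (k + 1 + 1)) (yhi (k + 1 + 1)))
    (hw'V : Even (k + 1) → u'.2 = ylo (k + 1 + 1) ∧ v'.2 = yhi (k + 1 + 1))
    (hw'H : Odd (k + 1) → u'.1 = xlo (k + 1 + 1) ∧ v'.1 = xhi (k + 1 + 1)) :
    ∃ z ∈ w.support, z ∈ w'.support := by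
  rcases Nat.even_or_odd k with hk | hk
  · obtain ⟨hx1, hx2, hy1, hy2⟩ := hodd (k + 1) le_add_self hk.add_one
    exact exists_mem_support_of_vertical_horizontal hx1 hx2 hy1 hy2 w hw (hwV hk).1 (hwV hk).2
      w' hw' (hw'H hk.add_one).1 (hw'H hk.add_one).2
  · obtain ⟨hx1, hx2, hy1, hy2⟩ := heven (k + 1) le_add_self hk.add_one
    obtain ⟨z, hz', hz⟩ := exists_mem_support_of_vertical_horizontal hx1 hx2 hy1 hy2 w' hw'
      (hw'V hk.add_one).1 (hw'V hk.add_one).2 w hw (hwH hk).1 (hwH hk).2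
    exact ⟨z, hz, hz'⟩

end WellJoined

theorem well_joined_crossings_path_general (xlo xhi ylo yhi : ℕ → ℤ)
    (hodd : ∀ m, 1 ≤ m → Odd m →
      xlo (m + 1) ≤ xlo m ∧ xhi m ≤ xhi (m + 1) ∧
      ylo m ≤ ylo (m + 1) ∧ yhi (m + 1) ≤ yhi m)
    (heven : ∀ m, 1 ≤ m → Even m →
      xlo m ≤ xlo (m + 1) ∧ xhi (m + 1) ≤ xhi m ∧
      ylo (m + 1) ≤ ylo m ∧ yhi m ≤ yhi (m + 1))
    (S : Set (ℤ × ℤ))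
    (hv : ∀ k, 1 ≤ k →
      VCross S (xlo (2 * k - 1)) (xhi (2 * k - 1)) (ylo (2 * k - 1)) (yhi (2 * k - 1)))
    (hh : ∀ k, 1 ≤ k →
      HCross S (xlo (2 * k)) (xhi (2 * k)) (ylo (2 * k)) (yhi (2 * k))) :
    ∃ T : Set (ℤ × ℤ), T ⊆ S ∧
      (∀ p ∈ T, ∀ q ∈ T, ∃ m : ℕ, ∃ f : Fin (m + 1) → ℤ × ℤ,
        f 0 = p ∧ f (Fin.last m) = q ∧ (∀ i, f i ∈ T) ∧
        ∀ i : Fin m, SiteAdj (f i.castSucc) (f i.succ)) ∧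
      ∀ m, 1 ≤ m → ∃ p ∈ T, p ∈ Rect (xlo m) (xhi m) (ylo m) (yhi m) := by
  choose u v w hw hwV hwH using exists_crossing_walk xlo xhi ylo yhi hv hh
  let C : ℕ → Set (ℤ × ℤ) := fun k => {z | z ∈ (w k).support}
  have hconn : (siteGraph.induce (⋃ k, C k)).Connected := by
    refine induce_iUnion_connected_of_chain (fun k => (w k).connected_induce_support) fun k => ?_
    obtain ⟨z, hz, hz'⟩ := exists_mem_support_of_consecutive_crossings xlo xhi ylo yhi hodd heven
      (w k) (w (k + 1)) (fun z hz => (hw k z hz).2) (hwV k) (hwH k)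
      (fun z hz => (hw (k + 1) z hz).2) (hwV (k + 1)) (hwH (k + 1))
    exact ⟨z, hz, hz'⟩
  refine ⟨⋃ k, C k, Set.iUnion_subset fun k z hz => (hw k z hz).1,
    fun p hp q hq => exists_fin_path_of_reachable (hconn.preconnected ⟨p, hp⟩ ⟨q, hq⟩),
    fun m hm => ⟨u (m - 1), Set.mem_iUnion_of_mem (m - 1) (w (m - 1)).start_mem_support, ?_⟩⟩
  obtain ⟨-, h⟩ := hw (m - 1) _ (w (m - 1)).start_mem_support
  rwa [Nat.sub_add_cancel hm] at h

/-- If `(R_m)_{m≥1}` is a well-joined sequence of rectangles with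
alternating types starting with `V→H` (so `R_m.x ⊆ R_{m+1}.x` and
`R_{m+1}.y ⊆ R_m.y` for odd `m`, and `R_{m+1}.x ⊆ R_m.x`, `R_m.y ⊆ R_{m+1}.y`
for even `m`), and a set `S` of open sites contains a vertical crossing of
each `R_{2k−1}` and a horizontal crossing of each `R_{2k}`, then `S` contains
a path-connected subgraph meeting every `R_m`. -/
theorem well_joined_crossings_path (xlo xhi ylo yhi : ℕ → ℤ)
    (hne : ∀ m, 1 ≤ m → xlo m ≤ xhi m ∧ ylo m ≤ yhi m)
    (hodd : ∀ m, 1 ≤ m → Odd m →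
      xlo (m + 1) ≤ xlo m ∧ xhi m ≤ xhi (m + 1) ∧
      ylo m ≤ ylo (m + 1) ∧ yhi (m + 1) ≤ yhi m)
    (heven : ∀ m, 1 ≤ m → Even m →
      xlo m ≤ xlo (m + 1) ∧ xhi (m + 1) ≤ xhi m ∧
      ylo (m + 1) ≤ ylo m ∧ yhi m ≤ yhi (m + 1))
    (S : Set (ℤ × ℤ))
    (hv : ∀ k, 1 ≤ k →
      VCross S (xlo (2 * k - 1)) (xhi (2 * k - 1)) (ylo (2 * k - 1)) (yhi (2 * k - 1)))
    (hh : ∀ k, 1 ≤ k →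
      HCross S (xlo (2 * k)) (xhi (2 * k)) (ylo (2 * k)) (yhi (2 * k))) :
    ∃ T : Set (ℤ × ℤ), T ⊆ S ∧
      (∀ p ∈ T, ∀ q ∈ T, ∃ m : ℕ, ∃ f : Fin (m + 1) → ℤ × ℤ,
        f 0 = p ∧ f (Fin.last m) = q ∧ (∀ i, f i ∈ T) ∧
        ∀ i : Fin m, SiteAdj (f i.castSucc) (f i.succ)) ∧
      ∀ m, 1 ≤ m → ∃ p ∈ T, p ∈ Rect (xlo m) (xhi m) (ylo m) (yhi m) :=
  well_joined_crossings_path_general xlo xhi ylo yhi hodd heven S hv hh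
end
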